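/- If H is a bipartite graph with Sidorenko's property, then K_2 □ H also has Sidorenko's property. -/

import Mathlib

/-!
A homomorphism `K₂ □ H → G` is a pair of homomorphisms `H → G` joined by edges of `G`, i.e. a
homomorphism from `H` to the graph `ψ(G)` on the `2e(G)` darts of `G`, two darts being adjacent
when their tails and their heads are. Hence `t_{K₂ □ H}(G) = t_H(ψ(G)) · t_{K₂}(G)^{v(H)}`.
The darts of `ψ(G)` are the homomorphic 4-cycles of `G`, so Sidorenko's property of `C₄`
(Cauchy–Schwarz twice: over vertices for the degrees, over pairs for the codegrees) gives
`t_{K₂}(ψ(G)) ≥ t_{K₂}(G)²`; Sidorenko's property of `H` applied to `ψ(G)` then yields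
`t_{K₂ □ H}(G) ≥ t_{K₂}(G)^{2e(H) + v(H)}`, and `e(K₂ □ H) = 2e(H) + v(H)`.
-/

open Finset

namespace SimpleGraph

variable {α β V W : Type*}

noncomputable def homDensity [Fintype V] [Fintype W] (H : SimpleGraph V) (G : SimpleGraph W) : ℝ :=
  Nat.card (H →g G) / (Fintype.card W : ℝ) ^ Fintype.card V

/-- `t_{K₂}(G)`: `K₂` has `2e(G)` homomorphisms into `G`, one per dart. -/
noncomputable def edgeHomDensity [Fintype W] (G : SimpleGraph W) : ℝ :=
  2 * Nat.card G.edgeSet / (Fintype.card W : ℝ) ^ 2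

lemma homDensity_nonneg [Fintype V] [Fintype W] (H : SimpleGraph V) (G : SimpleGraph W) :
    0 ≤ homDensity H G := by
  unfold homDensity
  positivity

lemma edgeHomDensity_nonneg [Fintype W] (G : SimpleGraph W) : 0 ≤ G.edgeHomDensity := by
  unfold edgeHomDensity
  positivity

def IsSidorenko [Fintype V] (H : SimpleGraph V) : Prop :=
  ∀ (W : Type) [Fintype W] [Nonempty W] (G : SimpleGraph W),
    edgeHomDensity G ^ Nat.card H.edgeSet ≤ homDensity H G

lemma IsSidorenko.of_isEmpty [Fintype V] [IsEmpty V] (H : SimpleGraph V) : H.IsSidorenko := by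
  intro W _ _ G
  simp [homDensity]

lemma card_dart_eq_two_mul_card_edgeSet [Fintype W] (G : SimpleGraph W) [DecidableRel G.Adj] :
    Fintype.card G.Dart = 2 * Nat.card G.edgeSet := by
  classical
  rw [dart_card_eq_twice_card_edges, Nat.card_eq_fintype_card, card_edgeSet]

lemma two_mul_card_edgeSet_eq_sum_degree [Fintype W] (G : SimpleGraph W) [DecidableRel G.Adj] :
    2 * Nat.card G.edgeSet = ∑ v, G.degree v := by
  rw [← card_dart_eq_two_mul_card_edgeSet, dart_card_eq_sum_degrees]

lemma card_edgeSet_boxProd [Fintype α] [Fintype β] (G : SimpleGraph α) (H : SimpleGraph β) :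
    Nat.card (G □ H).edgeSet =
      Fintype.card α * Nat.card H.edgeSet + Fintype.card β * Nat.card G.edgeSet := by
  classical
  have hsum (f : α → ℕ) (g : β → ℕ) : ∑ x : α × β, (f x.1 + g x.2) =
      Fintype.card β * ∑ a, f a + Fintype.card α * ∑ b, g b := by
    simp only [Fintype.sum_prod_type, sum_add_distrib, sum_const, card_univ, smul_eq_mul,
      ← sum_mul, mul_comm]
  have hdeg : 2 * Nat.card (G □ H).edgeSet = ∑ x : α × β, (G.degree x.1 + H.degree x.2) := by
    rw [two_mul_card_edgeSet_eq_sum_degree]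
    exact sum_congr rfl fun x _ => by convert degree_boxProd x
  rw [hsum (fun a => G.degree a) (fun b => H.degree b), ← two_mul_card_edgeSet_eq_sum_degree,
    ← two_mul_card_edgeSet_eq_sum_degree] at hdeg
  linarith

lemma card_edgeSet_top_fin_two : Nat.card (⊤ : SimpleGraph (Fin 2)).edgeSet = 1 := by
  rw [Nat.card_eq_fintype_card, card_edgeSet, card_edgeFinset_top_eq_card_choose_two]
  rfl

/-- The graph `ψ_{K₂}(G)` on `Hom(K₂, G)`, i.e. on the darts of `G`. -/
def dartGraph (G : SimpleGraph W) : SimpleGraph G.Dart where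
  Adj d₁ d₂ := G.Adj d₁.fst d₂.fst ∧ G.Adj d₁.snd d₂.snd
  symm := ⟨fun _ _ h => ⟨h.1.symm, h.2.symm⟩⟩
  loopless := ⟨fun _ h => G.loopless.irrefl _ h.1⟩

instance {G : SimpleGraph W} [DecidableRel G.Adj] : DecidableRel G.dartGraph.Adj :=
  fun _ _ => instDecidableAnd

def boxProdTopHomEquiv (H : SimpleGraph V) (G : SimpleGraph W) :
    ((⊤ : SimpleGraph (Fin 2)).boxProd H →g G) ≃ (H →g G.dartGraph) where
  toFun f :=
    { toFun u := ⟨(f (0, u), f (1, u)), f.map_adj (by simp)⟩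
      map_rel' h := ⟨f.map_adj (by simp [h]), f.map_adj (by simp [h])⟩ }
  invFun g :=
    { toFun p := if p.1 = 0 then (g p.2).fst else (g p.2).snd
      map_rel' := by
        rintro ⟨i, u⟩ ⟨j, v⟩ (⟨hij, rfl⟩ | ⟨huv, rfl⟩)
        · fin_cases i <;> fin_cases j
          all_goals first | exact absurd rfl hij | exact (g u).adj | exact (g u).adj.symm
        · have := g.map_adj huv
          by_cases hi : i = 0 <;> simp [hi, this.1, this.2] }
  left_inv f := by
    ext ⟨i, u⟩
    fin_cases i <;> rfl
  right_inv g := rfl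

/-- A dart `(x, a) → (b, z)` of `ψ_{K₂}(G)` is a closed walk `x a z b x` of length four in `G`. -/
def dartDartGraphEquiv (G : SimpleGraph W) :
    G.dartGraph.Dart ≃ Σ p : W × W, G.commonNeighbors p.1 p.2 × G.commonNeighbors p.1 p.2 where
  toFun d := ⟨(d.fst.fst, d.snd.snd), ⟨d.fst.snd, d.fst.adj, d.adj.2.symm⟩,
    ⟨d.snd.fst, d.adj.1, d.snd.adj.symm⟩⟩
  invFun q := ⟨(⟨(q.1.1, q.2.1), q.2.1.2.1⟩, ⟨(q.2.2, q.1.2), q.2.2.2.2.symm⟩),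
    q.2.2.2.1, q.2.1.2.2.symm⟩
  left_inv _ := rfl
  right_inv _ := rfl

def sigmaCommonNeighborsEquiv (G : SimpleGraph W) :
    (Σ p : W × W, G.commonNeighbors p.1 p.2) ≃ Σ v : W, G.neighborSet v × G.neighborSet v where
  toFun q := ⟨q.2, ⟨q.1.1, q.2.2.1.symm⟩, ⟨q.1.2, q.2.2.2.symm⟩⟩
  invFun r := ⟨(r.2.1, r.2.2), r.1, r.2.1.2.symm, r.2.2.2.symm⟩
  left_inv _ := rfl
  right_inv _ := rfl

section Counting

variable [Fintype W] (G : SimpleGraph W) [DecidableRel G.Adj]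

lemma card_dart_dartGraph :
    Fintype.card G.dartGraph.Dart = ∑ p : W × W, Fintype.card (G.commonNeighbors p.1 p.2) ^ 2 := by
  rw [Fintype.card_congr G.dartDartGraphEquiv, Fintype.card_sigma]
  simp only [Fintype.card_prod, sq]

lemma sum_card_commonNeighbors :
    ∑ p : W × W, Fintype.card (G.commonNeighbors p.1 p.2) = ∑ v, G.degree v ^ 2 := by
  rw [← Fintype.card_sigma, Fintype.card_congr G.sigmaCommonNeighborsEquiv, Fintype.card_sigma]
  simp only [Fintype.card_prod, card_neighborSet_eq_degree, sq]

lemma two_mul_card_edgeSet_pow_four_le :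
    (2 * Nat.card G.edgeSet) ^ 4 ≤ Fintype.card W ^ 4 * Fintype.card G.dartGraph.Dart := by
  have hdeg : (∑ v, G.degree v) ^ 2 ≤ Fintype.card W * ∑ v, G.degree v ^ 2 :=
    sq_sum_le_card_mul_sum_sq
  have hcodeg : (∑ p : W × W, Fintype.card (G.commonNeighbors p.1 p.2)) ^ 2 ≤
      Fintype.card W ^ 2 * ∑ p : W × W, Fintype.card (G.commonNeighbors p.1 p.2) ^ 2 := by
    simpa [sq] using sq_sum_le_card_mul_sum_sq (s := (univ : Finset (W × W)))
      (f := fun p => Fintype.card (G.commonNeighbors p.1 p.2))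
  rw [sum_card_commonNeighbors] at hcodeg
  rw [two_mul_card_edgeSet_eq_sum_degree, card_dart_dartGraph]
  calc (∑ v, G.degree v) ^ 4 = ((∑ v, G.degree v) ^ 2) ^ 2 := by ring
    _ ≤ (Fintype.card W * ∑ v, G.degree v ^ 2) ^ 2 := by gcongr
    _ = Fintype.card W ^ 2 * (∑ v, G.degree v ^ 2) ^ 2 := by ring
    _ ≤ Fintype.card W ^ 2 * (Fintype.card W ^ 2 *
          ∑ p : W × W, Fintype.card (G.commonNeighbors p.1 p.2) ^ 2) := by gcongr
    _ = _ := by ring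

lemma edgeHomDensity_sq_le_edgeHomDensity_dartGraph :
    G.edgeHomDensity ^ 2 ≤ G.dartGraph.edgeHomDensity := by
  have hC4 := G.two_mul_card_edgeSet_pow_four_le
  rcases (Nat.card G.edgeSet).eq_zero_or_pos with hm | hm
  · rw [edgeHomDensity, hm, Nat.cast_zero, mul_zero, zero_div, zero_pow two_ne_zero]
    exact G.dartGraph.edgeHomDensity_nonneg
  have hn : 0 < Fintype.card W := by
    have : 0 < Fintype.card W ^ 4 * Fintype.card G.dartGraph.Dart :=
      lt_of_lt_of_le (by positivity) hC4
    exact Nat.pos_of_ne_zero fun h => by simp [h] at this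
  have hψ : 2 * (Nat.card G.dartGraph.edgeSet : ℝ) = Fintype.card G.dartGraph.Dart := by
    exact_mod_cast (card_dart_eq_two_mul_card_edgeSet _).symm
  have hV : (Fintype.card G.Dart : ℝ) = 2 * Nat.card G.edgeSet := by
    exact_mod_cast card_dart_eq_two_mul_card_edgeSet G
  have hC4' : (2 * Nat.card G.edgeSet : ℝ) ^ 4 ≤
      (Fintype.card W : ℝ) ^ 4 * Fintype.card G.dartGraph.Dart := by
    exact_mod_cast hC4
  rw [edgeHomDensity, edgeHomDensity, hψ, hV, div_pow, div_le_div_iff₀ (by positivity)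
    (by positivity)]
  linarith

end Counting

lemma homDensity_boxProd_top_fin_two [Fintype V] [Fintype W] (H : SimpleGraph V)
    (G : SimpleGraph W) [DecidableRel G.Adj] [Nonempty G.Dart] :
    homDensity ((⊤ : SimpleGraph (Fin 2)).boxProd H) G =
      homDensity H G.dartGraph * G.edgeHomDensity ^ Fintype.card V := by
  have hV : (Fintype.card G.Dart : ℝ) = 2 * Nat.card G.edgeSet := by
    exact_mod_cast card_dart_eq_two_mul_card_edgeSet G
  have hm : (0 : ℝ) < 2 * Nat.card G.edgeSet := hV ▸ by exact_mod_cast Fintype.card_pos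
  have hn : (0 : ℝ) < Fintype.card W := by
    have : Nonempty W := ⟨(Classical.arbitrary G.Dart).fst⟩
    exact_mod_cast Fintype.card_pos
  rw [homDensity, homDensity, edgeHomDensity, Nat.card_congr (boxProdTopHomEquiv H G), hV,
    Fintype.card_prod, Fintype.card_fin, pow_mul, div_pow]
  field_simp

lemma IsSidorenko.boxProd_top_fin_two [Fintype V] {H : SimpleGraph V} (hH : H.IsSidorenko) :
    ((⊤ : SimpleGraph (Fin 2)).boxProd H).IsSidorenko := by
  classical
  intro W _ _ G
  cases isEmpty_or_nonempty V
  · exact IsSidorenko.of_isEmpty _ W G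
  rw [card_edgeSet_boxProd, card_edgeSet_top_fin_two, Fintype.card_fin, mul_one]
  rcases isEmpty_or_nonempty G.Dart with hG | hG
  · have hm : Nat.card G.edgeSet = 0 := by
      have := card_dart_eq_two_mul_card_edgeSet G
      rw [Fintype.card_eq_zero] at this
      omega
    rw [edgeHomDensity, hm, Nat.cast_zero, mul_zero, zero_div,
      zero_pow (by have := Fintype.card_pos (α := V); omega)]
    exact homDensity_nonneg _ _
  calc G.edgeHomDensity ^ (2 * Nat.card H.edgeSet + Fintype.card V)
      = (G.edgeHomDensity ^ 2) ^ Nat.card H.edgeSet * G.edgeHomDensity ^ Fintype.card V := by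
        rw [pow_add, pow_mul]
    _ ≤ G.dartGraph.edgeHomDensity ^ Nat.card H.edgeSet * G.edgeHomDensity ^ Fintype.card V := by
        gcongr ?_ ^ _ * _
        · exact pow_nonneg G.edgeHomDensity_nonneg _
        · exact G.edgeHomDensity_sq_le_edgeHomDensity_dartGraph
    _ ≤ homDensity H G.dartGraph * G.edgeHomDensity ^ Fintype.card V := by
        gcongr ?_ * _
        · exact pow_nonneg G.edgeHomDensity_nonneg _
        · exact hH G.Dart G.dartGraph
    _ = homDensity ((⊤ : SimpleGraph (Fin 2)).boxProd H) G :=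
        (homDensity_boxProd_top_fin_two H G).symm

end SimpleGraph

theorem boxProd_K2_sidorenko_general (VH : Type) [Fintype VH] (H : SimpleGraph VH)
    (hH : ∀ (W : Type) [Fintype W] [Nonempty W] (G : SimpleGraph W),
      (Nat.card (H →g G) : ℝ) / (Fintype.card W : ℝ) ^ (Fintype.card VH) ≥
        (2 * (Nat.card G.edgeSet : ℝ) / (Fintype.card W : ℝ) ^ 2) ^
          (Nat.card H.edgeSet)) :
    ∀ (W : Type) [Fintype W] [Nonempty W] (G : SimpleGraph W),
      (Nat.card ((⊤ : SimpleGraph (Fin 2)).boxProd H →g G) : ℝ) /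
          (Fintype.card W : ℝ) ^ (Fintype.card (Fin 2 × VH)) ≥
        (2 * (Nat.card G.edgeSet : ℝ) / (Fintype.card W : ℝ) ^ 2) ^
          (Nat.card ((⊤ : SimpleGraph (Fin 2)).boxProd H).edgeSet) :=
  SimpleGraph.IsSidorenko.boxProd_top_fin_two hH

/-- if `H` is a bipartite graph with Sidorenko's property, then
`K_2 □ H` also has Sidorenko's property. -/
theorem boxProd_K2_sidorenko (VH : Type) [Fintype VH] (H : SimpleGraph VH)
    (hbip : H.Colorable 2)
    (hH : ∀ (W : Type) [Fintype W] [Nonempty W] (G : SimpleGraph W),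
      (Nat.card (H →g G) : ℝ) / (Fintype.card W : ℝ) ^ (Fintype.card VH) ≥
        (2 * (Nat.card G.edgeSet : ℝ) / (Fintype.card W : ℝ) ^ 2) ^
          (Nat.card H.edgeSet)) :
    ∀ (W : Type) [Fintype W] [Nonempty W] (G : SimpleGraph W),
      (Nat.card ((⊤ : SimpleGraph (Fin 2)).boxProd H →g G) : ℝ) /
          (Fintype.card W : ℝ) ^ (Fintype.card (Fin 2 × VH)) ≥
        (2 * (Nat.card G.edgeSet : ℝ) / (Fintype.card W : ℝ) ^ 2) ^
          (Nat.card ((⊤ : SimpleGraph (Fin 2)).boxProd H).edgeSet) :=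
  boxProd_K2_sidorenko_general VH H hH
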